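/- Let M and N be matroids on a common finite ground set E. Then E admits a partition E = P ⊔ Q such that there exist disjoint sets S^M, S^N ⊆ P with S^M spanning in the restriction M|P and S^N spanning in N|P, and there exist sets I^M, I^N with I^M ∪ I^N = Q, I^M independent in the contraction M.Q and I^N independent in N.Q. -/

import Mathlib

open Matroid Set

variable {α : Type*}

/-- Deletion of a set from a matroid: restriction to the complement. -/
def Matroid.del (M : Matroid α) (D : Set α) : Matroid α := M ↾ (M.E \ D)

/-- Contraction of a set in a matroid, defined by duality. -/
def Matroid.con (M : Matroid α) (C : Set α) : Matroid α := ((M✶.del C))✶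

/-- A circuit: a minimal dependent set. -/
def IsCircuitOf (M : Matroid α) (C : Set α) : Prop := Minimal M.Dep C

/-- A wave for the pair `(M, N)`: disjoint sets `SM, SN ⊆ X` spanning `X`
in the respective restrictions. -/
def IsWave (M N : Matroid α) (X SM SN : Set α) : Prop :=
  SM ⊆ X ∧ SN ⊆ X ∧ X ⊆ M.E ∧ Disjoint SM SN ∧
  (M ↾ X).Spanning SM ∧ (N ↾ X).Spanning SN

/-!
Let `P ⊆ E` minimise `f X = r_M X + r_N X + |E \ X|`. Comparing `P` with its subsets shows
that the duals of `M ↾ P` and `N ↾ P` satisfy Edmonds' covering condition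
`|X| ≤ r₁ X + r₂ X`, and comparing `P` with its supersets shows the same for `M ／ P` and
`N ／ P`. The covering condition suffices for the ground set to be the union of an independent
set of each matroid: call `X` tight if `|X| = r_M X + r_N X`; by submodularity tight sets are
closed under union, so no element `e` lies both in the `M`-closure of a tight set and in the
`N`-closure of another, and then `e` can be contracted in one matroid and deleted in the other
without breaking the condition. Covering `P` by coindependent sets of `M ↾ P` and `N ↾ P` gives
the packing by taking complements.
-/

namespace Matroid

variable {M N : Matroid α} {P R X Y : Set α} {e : α}

/-- The rank as a natural number (junk value `0` for sets of infinite rank). -/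
noncomputable def rk (M : Matroid α) (X : Set α) : ℕ := (M.eRk X).toNat

@[simp] lemma cast_rk_eq (M : Matroid α) [M.RankFinite] (X : Set α) :
    (M.rk X : ℕ∞) = M.eRk X :=
  ENat.natCast_toNat (eRk_ne_top_iff.2 (M.isRkFinite_set X))

lemma rk_restrict (M : Matroid α) (hXR : X ⊆ R) : (M ↾ R).rk X = M.rk X := by
  rw [rk, restrict_eRk_eq M hXR, rk]

lemma eRk_contract_add_eRk (M : Matroid α) (C X : Set α) :
    (M ／ C).eRk X + M.eRk C = M.eRk (X ∪ C) := by
  obtain ⟨J, hJ⟩ := M.exists_isBasis' C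
  obtain ⟨K, hK, hJK⟩ :=
    hJ.indep.subset_isBasis'_of_subset (hJ.subset.trans subset_union_right : J ⊆ X ∪ C)
  have hKC : K ∩ C = J := (hJ.eq_of_subset_indep (hK.indep.inter_right C)
    (subset_inter hJK hJ.subset) inter_subset_right).symm
  have hK_eq : K \ C ∪ J = K := by rw [← hKC, sdiff_union_inter]
  have hb := hK.contract_isBasis' hJ (hK_eq.symm ▸ hK.indep)
  have hC0 : (M ／ C).eRk C ≤ 0 := by
    rw [← eRk_inter_ground, contract_ground, inter_sdiff_self, eRk_empty]
  rw [← (M ／ C).eRk_eq_eRk_union_eRk_le_zero X hC0,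
    ← (M ／ C).eRk_eq_eRk_sdiff_eRk_le_zero _ hC0, hb.eRk_eq_encard, hJ.eRk_eq_encard,
    hK.eRk_eq_encard, ← encard_union_eq, hK_eq]
  exact disjoint_sdiff_left.mono_right hJ.subset

lemma rk_inter_add_rk_union_le (M : Matroid α) [M.RankFinite] (X Y : Set α) :
    M.rk (X ∩ Y) + M.rk (X ∪ Y) ≤ M.rk X + M.rk Y := by
  simpa only [← cast_rk_eq, ← Nat.cast_add, Nat.cast_le] using M.eRk_inter_add_eRk_union_le X Y

lemma rk_mono (M : Matroid α) [M.RankFinite] : Monotone M.rk := fun X Y hXY ↦ by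
  simpa only [← cast_rk_eq, Nat.cast_le] using M.eRk_mono hXY

lemma rk_insert_le_add_one (M : Matroid α) [M.RankFinite] (e : α) (X : Set α) :
    M.rk (insert e X) ≤ M.rk X + 1 := by
  simpa only [← cast_rk_eq, ← Nat.cast_add_one, Nat.cast_le] using M.eRk_insert_le_add_one e X

lemma rk_insert_eq_add_one [M.RankFinite] (he : e ∈ M.E \ M.closure X) :
    M.rk (insert e X) = M.rk X + 1 := by
  simpa only [← cast_rk_eq, ← Nat.cast_add_one, Nat.cast_inj] using eRk_insert_eq_add_one he

lemma rk_insert_of_mem_closure [M.RankFinite] (he : e ∈ M.closure X) :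
    M.rk (insert e X) = M.rk X := by
  have h := M.eRk_insert_closure_eq e X
  rw [insert_eq_of_mem he, eRk_closure_eq] at h
  simpa only [← cast_rk_eq, Nat.cast_inj] using h.symm

@[simp] lemma rk_empty (M : Matroid α) : M.rk ∅ = 0 := by
  simp [rk]

lemma rk_contract_add_rk (M : Matroid α) [M.RankFinite] (C X : Set α) :
    (M ／ C).rk X + M.rk C = M.rk (X ∪ C) := by
  simpa only [← cast_rk_eq, ← Nat.cast_add, Nat.cast_inj] using M.eRk_contract_add_eRk C X

lemma rk_dual_add_rk (M : Matroid α) [M.Finite] (hX : X ⊆ M.E) :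
    M✶.rk X + M.rk M.E = M.rk (M.E \ X) + X.ncard := by
  have h := M.eRk_dual_add_eRank X hX
  rw [← eRk_ground, ← (M.ground_finite.subset hX).cast_ncard_eq] at h
  simpa only [← cast_rk_eq, ← Nat.cast_add, Nat.cast_inj] using h

lemma ncard_union_eq_rk_add_rk [M.Finite] [N.RankFinite]
    (h : ∀ X ⊆ M.E, X.ncard ≤ M.rk X + N.rk X) (hX : X ⊆ M.E) (hY : Y ⊆ M.E)
    (hXt : X.ncard = M.rk X + N.rk X) (hYt : Y.ncard = M.rk Y + N.rk Y) :
    (X ∪ Y).ncard = M.rk (X ∪ Y) + N.rk (X ∪ Y) := by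
  have hM := M.rk_inter_add_rk_union_le X Y
  have hN := N.rk_inter_add_rk_union_le X Y
  have hinter := h (X ∩ Y) (inter_subset_left.trans hX)
  have hunion := h (X ∪ Y) (union_subset hX hY)
  have hcard := ncard_union_add_ncard_inter X Y (M.ground_finite.subset hX)
    (M.ground_finite.subset hY)
  omega

lemma notMem_closure_of_tight_of_mem_closure [M.Finite] [N.RankFinite]
    (h : ∀ X ⊆ M.E, X.ncard ≤ M.rk X + N.rk X) (he : e ∈ M.E)
    (hX : X ⊆ M.E \ {e}) (hXt : X.ncard = M.rk X + N.rk X) (heX : e ∈ M.closure X)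
    (hY : Y ⊆ M.E \ {e}) (hYt : Y.ncard = M.rk Y + N.rk Y) : e ∉ N.closure Y := by
  intro heY
  rw [subset_sdiff, disjoint_singleton_right] at hX hY
  have hU := ncard_union_eq_rk_add_rk h hX.1 hY.1 hXt hYt
  have hM := rk_insert_of_mem_closure (M.closure_subset_closure (subset_union_left (t := Y)) heX)
  have hN := rk_insert_of_mem_closure (N.closure_subset_closure (subset_union_right (s := X)) heY)
  have hins := h _ (insert_subset he (union_subset hX.1 hY.1))
  rw [ncard_insert_of_notMem (by simp [hX.2, hY.2])
    (M.ground_finite.subset (union_subset hX.1 hY.1))] at hins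
  omega

lemma ncard_le_rk_contract_add_rk_delete [M.Finite] [N.RankFinite] (hE : M.E = N.E)
    (h : ∀ X ⊆ M.E, X.ncard ≤ M.rk X + N.rk X) (he : e ∈ M.E)
    (hM : ∀ X ⊆ M.E \ {e}, X.ncard = M.rk X + N.rk X → e ∉ M.closure X) :
    ∀ X ⊆ (M ／ {e}).E, X.ncard ≤ (M ／ {e}).rk X + (N ＼ {e}).rk X := by
  intro X hX
  rw [contract_ground] at hX
  have hXE := hX.trans sdiff_subset
  have heX : e ∉ X := fun h' ↦ (hX h').2 rfl
  have hcon := M.rk_contract_add_rk {e} X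
  have hdel : (N ＼ {e}).rk X = N.rk X := N.rk_restrict (hE ▸ hX)
  have he1 : M.rk {e} = 1 := by
    simpa using rk_insert_eq_add_one (X := ∅) ⟨he, hM ∅ (empty_subset _) (by simp)⟩
  have hins := h _ (insert_subset he hXE)
  rw [ncard_insert_of_notMem heX (M.ground_finite.subset hXE)] at hins
  have hN := N.rk_insert_le_add_one e X
  have hMmono := M.rk_mono (subset_insert e X)
  rw [union_singleton] at hcon
  -- A failure at `X` forces `X` to be tight with `e ∈ M.closure X`.
  by_contra! hlt
  have htight : X.ncard = M.rk X + N.rk X := by have := h X hXE; omega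
  refine hM X hX htight (by_contra fun hecl ↦ ?_)
  have := rk_insert_eq_add_one ⟨he, hecl⟩
  omega

theorem exists_indep_union_eq_ground [M.Finite] (hE : M.E = N.E)
    (h : ∀ X ⊆ M.E, X.ncard ≤ M.rk X + N.rk X) :
    ∃ I J, I ∪ J = M.E ∧ M.Indep I ∧ N.Indep J := by
  obtain ⟨n, hn⟩ : ∃ n, M.E.ncard = n := ⟨_, rfl⟩
  induction n generalizing M N with
  | zero =>
    rw [ncard_eq_zero M.ground_finite] at hn
    exact ⟨∅, ∅, by rw [union_empty, hn], M.empty_indep, N.empty_indep⟩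
  | succ n ih =>
    have : N.Finite := ⟨hE ▸ M.ground_finite⟩
    obtain ⟨e, he⟩ := nonempty_of_ncard_ne_zero (hn.trans_ne n.succ_ne_zero)
    wlog hM : ∀ X ⊆ M.E \ {e}, X.ncard = M.rk X + N.rk X → e ∉ M.closure X generalizing M N
    · push Not at hM
      obtain ⟨X, hX, hXt, heX⟩ := hM
      obtain ⟨J, I, hJI, hJ, hI⟩ := this (M := N) (N := M) hE.symm
        (fun Y hY ↦ (h Y (hE ▸ hY)).trans_eq (add_comm _ _)) (hE ▸ hn) inferInstance
        (hE ▸ he)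
        fun Y hY hYt ↦ notMem_closure_of_tight_of_mem_closure h he hX hXt heX (hE ▸ hY)
          (hYt.trans (add_comm _ _))
      exact ⟨I, J, by rw [union_comm, hJI, hE], hI, hJ⟩
    obtain ⟨I, J, hIJ, hI, hJ⟩ := ih (M := M ／ {e}) (N := N ＼ {e}) (by simp [hE])
      (ncard_le_rk_contract_add_rk_delete hE h he hM)
      (by rw [contract_ground, ncard_sdiff_singleton_of_mem he, hn, Nat.add_sub_cancel])
    have hnl : M.IsNonloop e := isNonloop_of_notMem_closure (hM ∅ (empty_subset _) (by simp)) he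
    rw [hnl.contractElem_indep_iff] at hI
    refine ⟨insert e I, J, ?_, hI.2, hJ.of_delete⟩
    rw [insert_union, hIJ, contract_ground, insert_sdiff_singleton, insert_eq_of_mem he]

/-- The minimum over `X ⊆ M.E` is the rank of the matroid union of `M` and `N`. -/
noncomputable def unionRkBound (M N : Matroid α) (X : Set α) : ℕ :=
  M.rk X + N.rk X + (M.E \ X).ncard

theorem exists_disjoint_spanning [M.Finite] (hE : M.E = N.E)
    (h : ∀ X ⊆ M.E, unionRkBound M N M.E ≤ unionRkBound M N X) :
    ∃ S T, Disjoint S T ∧ M.Spanning S ∧ N.Spanning T := by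
  have : N.Finite := ⟨hE ▸ M.ground_finite⟩
  obtain ⟨I, J, hIJ, hI, hJ⟩ := exists_indep_union_eq_ground (M := M✶) (N := N✶) hE
    fun X (hX : X ⊆ M.E) ↦ by
      have hM := M.rk_dual_add_rk hX
      have hN := N.rk_dual_add_rk (hE ▸ hX)
      have hcompl := h (M.E \ X) sdiff_subset
      rw [unionRkBound, unionRkBound, sdiff_sdiff_cancel_left hX, sdiff_self, ncard_empty] at hcompl
      rw [← hE] at hN
      omega
  have hIJ : I ∪ J = M.E := hIJ
  refine ⟨M.E \ I, N.E \ J, ?_, Coindep.compl_spanning hI, Coindep.compl_spanning hJ⟩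
  rw [← hE, ← hIJ]
  exact disjoint_left.2 fun x hxI hxJ ↦ hxI.1.elim hxI.2 hxJ.2

lemma unionRkBound_restrict_le_of_minimal [M.Finite] (hPE : P ⊆ M.E)
    (hP : ∀ X ⊆ M.E, unionRkBound M N P ≤ unionRkBound M N X) :
    ∀ X ⊆ (M ↾ P).E,
      unionRkBound (M ↾ P) (N ↾ P) (M ↾ P).E ≤ unionRkBound (M ↾ P) (N ↾ P) X := by
  intro X (hXP : X ⊆ P)
  have hmin := hP X (hXP.trans hPE)
  simp only [unionRkBound, restrict_ground_eq, rk_restrict _ hXP, rk_restrict _ subset_rfl,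
    sdiff_self, ncard_empty] at hmin ⊢
  have hfin := M.ground_finite
  have hX := ncard_sdiff_add_ncard_of_subset (hXP.trans hPE) hfin
  have hP' := ncard_sdiff_add_ncard_of_subset hPE hfin
  have hPX := ncard_sdiff_add_ncard_of_subset hXP (hfin.subset hPE)
  omega

lemma ncard_le_rk_contract_add_rk_contract_of_minimal [M.Finite] (hE : M.E = N.E) (hPE : P ⊆ M.E)
    (hP : ∀ X ⊆ M.E, unionRkBound M N P ≤ unionRkBound M N X) :
    ∀ X ⊆ (M ／ P).E, X.ncard ≤ (M ／ P).rk X + (N ／ P).rk X := by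
  have : N.Finite := ⟨hE ▸ M.ground_finite⟩
  intro X (hX : X ⊆ M.E \ P)
  have hM := M.rk_contract_add_rk P X
  have hN := N.rk_contract_add_rk P X
  have hXPE := union_subset (hX.trans sdiff_subset) hPE
  have hmin := hP (X ∪ P) hXPE
  rw [unionRkBound, unionRkBound] at hmin
  have hfin := M.ground_finite
  have hXP := ncard_sdiff_add_ncard_of_subset hXPE hfin
  have hP' := ncard_sdiff_add_ncard_of_subset hPE hfin
  have hcard := ncard_union_eq (subset_sdiff.1 hX).2 (hfin.subset (hX.trans sdiff_subset))
    (hfin.subset hPE)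
  omega

end Matroid

/-- The Packing/Covering theorem for finite matroids. -/
theorem packing_covering_finite (M N : Matroid α) (hE : M.E = N.E) (hfin : M.E.Finite) :
    ∃ P Q : Set α, P ∪ Q = M.E ∧ Disjoint P Q ∧
      (∃ SM SN, SM ⊆ P ∧ SN ⊆ P ∧ Disjoint SM SN ∧
        (M ↾ P).Spanning SM ∧ (N ↾ P).Spanning SN) ∧
      (∃ IM IN, IM ∪ IN = Q ∧ (M.con (M.E \ Q)).Indep IM ∧ (N.con (N.E \ Q)).Indep IN) := by
  have : M.Finite := ⟨hfin⟩
  obtain ⟨P, hPE, hP⟩ := exists_min_image {X | X ⊆ M.E} (unionRkBound M N) hfin.finite_subsets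
    ⟨∅, empty_subset _⟩
  have : (M ↾ P).Finite := ⟨hfin.subset hPE⟩
  refine ⟨P, M.E \ P, union_sdiff_cancel hPE, disjoint_sdiff_right, ?_, ?_⟩
  · obtain ⟨S, T, hST, hS, hT⟩ := exists_disjoint_spanning (M := M ↾ P) (N := N ↾ P) rfl
      (unionRkBound_restrict_le_of_minimal hPE hP)
    exact ⟨S, T, hS.subset_ground, hT.subset_ground, hST, hS, hT⟩
  · rw [sdiff_sdiff_cancel_left hPE, ← hE, sdiff_sdiff_cancel_left hPE]
    exact exists_indep_union_eq_ground (M := M ／ P) (N := N ／ P) (by simp [hE])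
      (ncard_le_rk_contract_add_rk_contract_of_minimal hE hPE hP)
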